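/- Let I ⊆ ℝ be an open interval, H a nonzero real number, and h : I → ℝ a smooth function with h'(s) ≠ 0 for all s ∈ I. Let γ : I → ℝ³ be smooth with γ'(s) = (H/(2h'(s)))·(−1 − h(s)², 1 − h(s)², 2h(s)), and let n : I → ℝ³ be a smooth map with ⟨n,n⟩ = 0, ⟨n,γ'⟩ = −1, and ⟨n,γ''⟩ = 0 on I. Then the lightlike curvature κ_γ := ⟨(γ''/H)', n⟩ of γ satisfies κ_γ = S(h)/H on I, where S(h) is the Schwarzian derivative of h. -/

import Mathlib

noncomputable section

/-- The Minkowski bilinear form on ℝ³ with signature (−,+,+):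
`⟨x,y⟩ = −x₁y₁ + x₂y₂ + x₃y₃`. -/
def ml (x y : Fin 3 → ℝ) : ℝ := -(x 0 * y 0) + x 1 * y 1 + x 2 * y 2

/-- Determinant of the 3×3 matrix with columns `u`, `v`, `w`. -/
def det3 (u v w : Fin 3 → ℝ) : ℝ :=
  u 0 * (v 1 * w 2 - v 2 * w 1) - v 0 * (u 1 * w 2 - u 2 * w 1)
    + w 0 * (u 1 * v 2 - u 2 * v 1)

/-- The Lorentzian cross product on ℝ³: the unique vector with
`ml (lcross u v) w = det3 u v w` for all `w`. -/
def lcross (u v : Fin 3 → ℝ) : Fin 3 → ℝ :=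
  ![-(u 1 * v 2 - u 2 * v 1), u 2 * v 0 - u 0 * v 2, u 0 * v 1 - u 1 * v 0]

open Filter Topology

/-!
Put `N(x) = (-1 - x², 1 - x², 2x)`, so that `γ' = (H/2) h'⁻¹ N(h)`. The vectors `N(x)`, `N'(x)` and
`N'' = (-2, -2, 0)` form a null frame: `N` and `N''` are null with `⟨N, N''⟩ = -4`, and `N'` is
orthogonal to both with `⟨N', N'⟩ = 4`. Since `h'⁻¹ h' = 1`, `γ'' = (H/2)((h'⁻¹)' N(h) + N'(h))`, so
`γ''` and `γ'''` have explicit coordinates in this frame in terms of `h'`, `h''`, `h'''`. The conditions on `n` determine its pairings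
`⟨N, n⟩ = -2h'/H` and `⟨N', n⟩ = -2h''/(Hh')`, and then `⟨n, n⟩ = 0` gives
`⟨N'', n⟩ = -h''²/(Hh'³)`; substituting them into `⟨γ''', n⟩/H` yields `S(h)/H`.
-/

def nullDir (x : ℝ) : Fin 3 → ℝ := ![-1 - x ^ 2, 1 - x ^ 2, 2 * x]

def nullDirDeriv (x : ℝ) : Fin 3 → ℝ := ![-2 * x, -2 * x, 2]

def nullDirDeriv2 : Fin 3 → ℝ := ![-2, -2, 0]

theorem ml_comm (x y : Fin 3 → ℝ) : ml x y = ml y x := by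
  simp only [ml]; ring

theorem ml_add_left (x y z : Fin 3 → ℝ) : ml (x + y) z = ml x z + ml y z := by
  simp only [ml, Pi.add_apply]; ring

theorem ml_smul_left (a : ℝ) (x y : Fin 3 → ℝ) : ml (a • x) y = a * ml x y := by
  simp only [ml, Pi.smul_apply, smul_eq_mul]; ring

theorem ml_nullDirDeriv_sq_of_ml_self_eq_zero {n : Fin 3 → ℝ} (hn : ml n n = 0) (x : ℝ) :
    ml (nullDirDeriv x) n ^ 2 = 2 * ml (nullDir x) n * ml nullDirDeriv2 n := by
  simp only [ml, nullDir, nullDirDeriv, nullDirDeriv2, Matrix.cons_val_zero, Matrix.cons_val_one,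
    Matrix.cons_val_two, Matrix.head_cons, Matrix.tail_cons] at hn ⊢
  linear_combination 4 * hn

theorem hasDerivAt_nullDir (x : ℝ) : HasDerivAt nullDir (nullDirDeriv x) x := by
  refine hasDerivAt_pi.2 fun i => ?_
  fin_cases i
  · simpa [nullDir, nullDirDeriv] using ((hasDerivAt_id x).pow 2).const_sub (-1)
  · simpa [nullDir, nullDirDeriv] using ((hasDerivAt_id x).pow 2).const_sub 1
  · simpa [nullDir, nullDirDeriv] using (hasDerivAt_id x).const_mul 2

theorem hasDerivAt_nullDirDeriv (x : ℝ) : HasDerivAt nullDirDeriv nullDirDeriv2 x := by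
  refine hasDerivAt_pi.2 fun i => ?_
  fin_cases i
  · simpa [nullDirDeriv, nullDirDeriv2] using (hasDerivAt_id x).const_mul (-2)
  · simpa [nullDirDeriv, nullDirDeriv2] using (hasDerivAt_id x).const_mul (-2)
  · simpa [nullDirDeriv, nullDirDeriv2] using hasDerivAt_const x (2 : ℝ)

theorem ContDiffOn.hasDerivAt_deriv {𝕜 F : Type*} [NontriviallyNormedField 𝕜]
    [NormedAddCommGroup F] [NormedSpace 𝕜 F] {f : 𝕜 → F} {n : WithTop ℕ∞} {U : Set 𝕜}
    (hf : ContDiffOn 𝕜 n f U) (hn : n ≠ 0) (hU : IsOpen U) {t : 𝕜} (ht : t ∈ U) :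
    HasDerivAt f (deriv f t) t :=
  ((hf.differentiableOn hn).differentiableAt (hU.mem_nhds ht)).hasDerivAt

theorem HasDerivAt.smul_nullDir_comp {a h : ℝ → ℝ} {a' h' t : ℝ} (ha : HasDerivAt a a' t)
    (hh : HasDerivAt h h' t) :
    HasDerivAt (fun r => a r • nullDir (h r))
      (a' • nullDir (h t) + (a t * h') • nullDirDeriv (h t)) t :=
  (ha.smul ((hasDerivAt_nullDir (h t)).scomp t hh)).congr_deriv
    (by rw [smul_smul, add_comm, mul_comm]; rfl)

theorem HasDerivAt.neg_div_sq {u v : ℝ → ℝ} {v' t : ℝ} (hu : HasDerivAt u (v t) t)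
    (hv : HasDerivAt v v' t) (hut : u t ≠ 0) :
    HasDerivAt (fun r => -v r / u r ^ 2) ((2 * v t ^ 2 - u t * v') / u t ^ 3) t :=
  (hv.neg.div (hu.pow 2) (pow_ne_zero 2 hut)).congr_deriv
    (by simp only [Pi.neg_apply, Pi.pow_apply]; field_simp; ring)

def nullCurveAccel (h : ℝ → ℝ) (t : ℝ) : Fin 3 → ℝ :=
  (-deriv (deriv h) t / deriv h t ^ 2) • nullDir (h t) + nullDirDeriv (h t)

theorem deriv_deriv_eq_smul_nullCurveAccel {U : Set ℝ} (hU : IsOpen U) {c : ℝ} {h : ℝ → ℝ}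
    {γ : ℝ → Fin 3 → ℝ} (hγ' : ∀ t ∈ U, deriv γ t = c • ((deriv h t)⁻¹ • nullDir (h t)))
    {t : ℝ} (ht : t ∈ U) (hh1 : HasDerivAt h (deriv h t) t)
    (hh2 : HasDerivAt (deriv h) (deriv (deriv h) t) t) (hu : deriv h t ≠ 0) :
    deriv (deriv γ) t = c • nullCurveAccel h t := by
  have hev : deriv γ =ᶠ[𝓝 t] fun r => c • ((deriv h r)⁻¹ • nullDir (h r)) :=
    eventually_of_mem (hU.mem_nhds ht) hγ'
  refine hev.deriv_eq.trans ((((hh2.inv hu).smul_nullDir_comp hh1).const_smul c).deriv.trans ?_)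
  rw [Pi.inv_apply, inv_mul_cancel₀ hu, one_smul]
  rfl

theorem hasDerivAt_nullCurveAccel {h : ℝ → ℝ} {t : ℝ} (hh1 : HasDerivAt h (deriv h t) t)
    (hh2 : HasDerivAt (deriv h) (deriv (deriv h) t) t)
    (hh3 : HasDerivAt (deriv (deriv h)) (deriv (deriv (deriv h)) t) t) (hu : deriv h t ≠ 0) :
    HasDerivAt (nullCurveAccel h)
      (((2 * deriv (deriv h) t ^ 2 - deriv h t * deriv (deriv (deriv h)) t) / deriv h t ^ 3)
          • nullDir (h t) + (-deriv (deriv h) t / deriv h t) • nullDirDeriv (h t)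
        + deriv h t • nullDirDeriv2) t :=
  (((hh2.neg_div_sq hh3 hu).smul_nullDir_comp hh1).add
    ((hasDerivAt_nullDirDeriv (h t)).scomp t hh1)).congr_deriv (by field_simp)

theorem frame_coords_combination_eq_schwarzian {H u u₁ u₂ p q r : ℝ} (hH : H ≠ 0) (hu : u ≠ 0)
    (hp : H / 2 * (u⁻¹ * p) = -1) (hq : H / 2 * (-u₁ / u ^ 2 * p + q) = 0)
    (hnull : q ^ 2 = 2 * p * r) :
    1 / 2 * ((2 * u₁ ^ 2 - u * u₂) / u ^ 3 * p + -u₁ / u * q + u * r)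
      = (u₂ / u - 3 / 2 * (u₁ / u) ^ 2) / H := by
  have hp' : p = -2 * u / H := by
    field_simp at hp ⊢
    linarith
  have hq' : q = -2 * u₁ / (H * u) := by
    rw [hp'] at hq
    field_simp at hq ⊢
    linarith
  have hr' : r = -u₁ ^ 2 / (H * u ^ 3) := by
    rw [hp', hq'] at hnull
    field_simp at hnull ⊢
    linarith
  rw [hp', hq', hr']
  field_simp
  ring

theorem stmt18_general
    (I : Set ℝ) (hIopen : IsOpen I)
    (H : ℝ) (hH : H ≠ 0)
    (h : ℝ → ℝ) (hhsm : ContDiffOn ℝ (⊤ : ℕ∞) h I)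
    (hh' : ∀ s ∈ I, deriv h s ≠ 0)
    (γ : ℝ → Fin 3 → ℝ)
    (hγ' : ∀ s ∈ I, deriv γ s =
      (H / (2 * deriv h s)) • ![-1 - h s ^ 2, 1 - h s ^ 2, 2 * h s])
    (n : ℝ → Fin 3 → ℝ)
    (hnn : ∀ s ∈ I, ml (n s) (n s) = 0)
    (hnγ' : ∀ s ∈ I, ml (n s) (deriv γ s) = -1)
    (hnγ'' : ∀ s ∈ I, ml (n s) (deriv (deriv γ) s) = 0)
    (e : ℝ → Fin 3 → ℝ)
    (hedef : ∀ s, e s = (1 / H) • deriv (deriv γ) s)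
    (κγ Sh : ℝ → ℝ)
    (hκdef : ∀ s, κγ s = ml (deriv e s) (n s))
    (hShdef : ∀ s, Sh s = deriv (deriv (deriv h)) s / deriv h s
      - (3 / 2) * (deriv (deriv h) s / deriv h s) ^ 2) :
    ∀ s ∈ I, κγ s = Sh s / H := by
  intro s hs
  have hdh : ContDiffOn ℝ (⊤ : ℕ∞) (deriv h) I := hhsm.deriv_of_isOpen hIopen (by simp)
  have hd2h : ContDiffOn ℝ (⊤ : ℕ∞) (deriv (deriv h)) I := hdh.deriv_of_isOpen hIopen (by simp)
  have hγ'_eq : ∀ t ∈ I, deriv γ t = (H / 2) • ((deriv h t)⁻¹ • nullDir (h t)) := by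
    intro t ht
    rw [hγ' t ht, smul_smul, nullDir]
    congr 1
    ring
  have hγ'' : ∀ t ∈ I, deriv (deriv γ) t = (H / 2) • nullCurveAccel h t := fun t ht =>
    deriv_deriv_eq_smul_nullCurveAccel hIopen hγ'_eq ht (hhsm.hasDerivAt_deriv (by simp) hIopen ht)
      (hdh.hasDerivAt_deriv (by simp) hIopen ht) (hh' t ht)
  have he : e =ᶠ[𝓝 s] fun t => (1 / 2 : ℝ) • nullCurveAccel h t := by
    filter_upwards [hIopen.mem_nhds hs] with t ht
    rw [hedef, hγ'' t ht, smul_smul]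
    field_simp
  have hp := hnγ' s hs
  rw [hγ'_eq s hs, ml_comm, ml_smul_left, ml_smul_left] at hp
  have hq := hnγ'' s hs
  rw [hγ'' s hs, ml_comm, ml_smul_left, nullCurveAccel, ml_add_left, ml_smul_left] at hq
  have he' := (hasDerivAt_nullCurveAccel (hhsm.hasDerivAt_deriv (by simp) hIopen hs)
    (hdh.hasDerivAt_deriv (by simp) hIopen hs) (hd2h.hasDerivAt_deriv (by simp) hIopen hs)
    (hh' s hs)).const_smul (1 / 2 : ℝ)
  rw [hκdef, he.deriv_eq.trans he'.deriv]
  simp only [ml_smul_left, ml_add_left]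
  rw [frame_coords_combination_eq_schwarzian hH (hh' s hs) hp hq
    (ml_nullDirDeriv_sq_of_ml_self_eq_zero (hnn s hs) (h s)), hShdef]

/-- the lightlike curvature of the null curve generated by `h`
equals `S(h)/H`, where `S(h)` is the Schwarzian derivative of `h`. -/
theorem stmt18
    (I : Set ℝ) (hIopen : IsOpen I) (hIconn : I.OrdConnected)
    (H : ℝ) (hH : H ≠ 0)
    (h : ℝ → ℝ) (hhsm : ContDiffOn ℝ (⊤ : ℕ∞) h I)
    (hh' : ∀ s ∈ I, deriv h s ≠ 0)
    (γ : ℝ → Fin 3 → ℝ)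
    (hγsm : ContDiffOn ℝ (⊤ : ℕ∞) γ I)
    (hγ' : ∀ s ∈ I, deriv γ s =
      (H / (2 * deriv h s)) • ![-1 - h s ^ 2, 1 - h s ^ 2, 2 * h s])
    (n : ℝ → Fin 3 → ℝ)
    (hnsm : ContDiffOn ℝ (⊤ : ℕ∞) n I)
    (hnn : ∀ s ∈ I, ml (n s) (n s) = 0)
    (hnγ' : ∀ s ∈ I, ml (n s) (deriv γ s) = -1)
    (hnγ'' : ∀ s ∈ I, ml (n s) (deriv (deriv γ) s) = 0)
    (e : ℝ → Fin 3 → ℝ)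
    (hedef : ∀ s, e s = (1 / H) • deriv (deriv γ) s)
    (κγ Sh : ℝ → ℝ)
    (hκdef : ∀ s, κγ s = ml (deriv e s) (n s))
    (hShdef : ∀ s, Sh s = deriv (deriv (deriv h)) s / deriv h s
      - (3 / 2) * (deriv (deriv h) s / deriv h s) ^ 2) :
    ∀ s ∈ I, κγ s = Sh s / H :=
  stmt18_general I hIopen H hH h hhsm hh' γ hγ' n hnn hnγ' hnγ'' e hedef κγ Sh hκdef hShdef
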